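/- arXiv:1712.02324 — 6 statements merged into one kernel-verified Lean document; each statement's English description precedes it below -/
import Mathlib

section
/- In the set-graph G_{A^{(n)}} with n ≥ 1, the clique number is 2^{n-1}, i.e., the largest complete subgraph is K_{2^{n-1}}. -/
/-- The set-graph: vertices are nonempty subsets of an `n`-element set,
two distinct subsets adjacent iff they intersect. -/
def setGraph (n : ℕ) : SimpleGraph {s : Finset (Fin n) // s.Nonempty} where
  Adj a b := a ≠ b ∧ (a.1 ∩ b.1).Nonempty
  symm := by
    constructor
    intro a b h
    exact ⟨h.1.symm, by rw [Finset.inter_comm]; exact h.2⟩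
  loopless := by constructor; intro a h; exact h.1 rfl

/-!
Cliques of the set-graph are exactly the intersecting families of subsets (the empty set never
lies in an intersecting family, so nothing is lost by discarding it). An intersecting family of
subsets of an `n`-set has at most `2 ^ n / 2` members, since it cannot contain a set together with
its complement; when `n ≥ 1` every maximal intersecting family (e.g. all sets through a fixed
point) attains this bound.
-/

open Finset

namespace setGraph

variable {n : ℕ}

theorem isClique_iff_intersecting {S : Finset {s : Finset (Fin n) // s.Nonempty}} :
    (setGraph n).IsClique (S : Set _) ↔
      (↑(S.map (Function.Embedding.subtype _)) : Set (Finset (Fin n))).Intersecting := by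
  simp only [coe_map, Function.Embedding.coe_subtype]
  constructor
  · rintro hS _ ⟨a, ha, rfl⟩ _ ⟨b, hb, rfl⟩ hab
    have hne : (a.1 ∩ b.1).Nonempty := by
      rcases eq_or_ne a b with rfl | hne
      · simpa using a.2
      · exact (hS ha hb hne).2
    exact hne.ne_empty (disjoint_iff_inter_eq_empty.1 hab)
  · intro hS a ha b hb hab
    exact ⟨hab, not_disjoint_iff_nonempty_inter.1 (hS ⟨a, ha, rfl⟩ ⟨b, hb, rfl⟩)⟩

theorem two_mul_card_le_of_isClique {S : Finset {s : Finset (Fin n) // s.Nonempty}}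
    (hS : (setGraph n).IsClique (S : Set _)) : 2 * #S ≤ 2 ^ n := by
  simpa using (isClique_iff_intersecting.1 hS).card_le

theorem exists_isClique_two_mul_card_eq (hn : 1 ≤ n) :
    ∃ S : Finset {s : Finset (Fin n) // s.Nonempty},
      (setGraph n).IsClique (S : Set _) ∧ 2 * #S = 2 ^ n := by
  have : Nonempty (Fin n) := ⟨⟨0, hn⟩⟩
  obtain ⟨t, -, ht_card, ht⟩ :=
    (coe_empty (α := Finset (Fin n)) ▸ Set.intersecting_empty).exists_card_eq
  have ht_nonempty : ∀ s ∈ t, s.Nonempty := fun s hs ↦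
    nonempty_iff_ne_empty.2 fun h ↦ ht.bot_notMem (by rwa [h] at hs)
  refine ⟨t.subtype Finset.Nonempty, ?_, ?_⟩
  · rwa [isClique_iff_intersecting, subtype_map_of_mem ht_nonempty]
  · simpa [card_subtype, filter_true_of_mem ht_nonempty] using ht_card

end setGraph

theorem setGraph_cliqueNumber (n : ℕ) (hn : 1 ≤ n) :
    IsGreatest {k : ℕ | ∃ S : Finset {s : Finset (Fin n) // s.Nonempty},
      (setGraph n).IsNClique k S} (2 ^ (n - 1)) := by
  have hpow : 2 ^ n = 2 * 2 ^ (n - 1) := by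
    rw [← pow_succ', Nat.sub_add_cancel hn]
  constructor
  · obtain ⟨S, hS, hcard⟩ := setGraph.exists_isClique_two_mul_card_eq hn
    exact ⟨S, hS, by omega⟩
  · rintro k ⟨S, hS⟩
    have := setGraph.two_mul_card_le_of_isClique hS.isClique
    rw [hS.card_eq] at this
    omega
end

section
/- The chromatic number of the set-graph G_{A^{(n)}}, n ≥ 1, equals 2^{n-1}. -/
theorem Fintype.card_finset_mem {α : Type*} [Fintype α] [DecidableEq α] (a : α) :
    Fintype.card {s : Finset α // a ∈ s} = 2 ^ (Fintype.card α - 1) := by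
  have hcompl : Fintype.card {s : Finset α // a ∈ s} = Fintype.card {s : Finset α // a ∉ s} :=
    Fintype.card_congr <| Equiv.subtypeEquiv (compl_involutive.toPerm _) fun s => by simp
  have hsum := Fintype.card_congr (Equiv.sumCompl fun s : Finset α => a ∈ s)
  have hpos : 0 < Fintype.card α := Fintype.card_pos_iff.2 ⟨a⟩
  have hpow : 2 ^ Fintype.card α = 2 * 2 ^ (Fintype.card α - 1) := by
    rw [← pow_succ', Nat.sub_add_cancel hpos]
  rw [Fintype.card_sum, ← hcompl, Fintype.card_finset, hpow] at hsum
  omega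

theorem Finset.eq_or_disjoint_of_ite_compl_eq {α : Type*} [Fintype α] [DecidableEq α]
    {a : α} {u v : Finset α} (h : (if a ∈ u then u else uᶜ) = if a ∈ v then v else vᶜ) :
    u = v ∨ Disjoint u v := by
  split_ifs at h with hu hv hv
  · exact .inl h
  · exact .inr (h ▸ disjoint_compl_left)
  · exact .inr (h ▸ disjoint_compl_right)
  · exact .inl (compl_injective h)

namespace setGraph

variable {n : ℕ}

def coloringByMem (a : Fin n) : (setGraph n).Coloring {s : Finset (Fin n) // a ∈ s} :=
  SimpleGraph.Coloring.mk
    (fun s => if h : a ∈ s.1 then ⟨s.1, h⟩ else ⟨s.1ᶜ, Finset.mem_compl.2 h⟩)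
    fun {u v} ⟨hne, hmeet⟩ hcol => by
      have h : (if a ∈ u.1 then u.1 else u.1ᶜ) = if a ∈ v.1 then v.1 else v.1ᶜ := by
        simpa only [apply_dite Subtype.val, dite_eq_ite] using congrArg Subtype.val hcol
      rcases Finset.eq_or_disjoint_of_ite_compl_eq h with heq | hdisj
      · exact hne (Subtype.ext heq)
      · exact Finset.not_nonempty_iff_eq_empty.2 (Finset.disjoint_iff_inter_eq_empty.1 hdisj) hmeet

theorem chromaticNumber_le_card_mem (a : Fin n) :
    (setGraph n).chromaticNumber ≤ Fintype.card {s : Finset (Fin n) // a ∈ s} :=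
  (coloringByMem a).colorable.chromaticNumber_le

theorem card_mem_le_chromaticNumber (a : Fin n) :
    Fintype.card {s : Finset (Fin n) // a ∈ s} ≤ (setGraph n).chromaticNumber :=
  SimpleGraph.le_chromaticNumber_of_pairwise_adj (Nat.card_eq_fintype_card).ge
    (fun s => ⟨s.1, a, s.2⟩) fun u v hne =>
      ⟨fun h => hne (Subtype.ext (Subtype.mk.inj h)), a, Finset.mem_inter.2 ⟨u.2, v.2⟩⟩

end setGraph

theorem setGraph_chromaticNumber (n : ℕ) (hn : 1 ≤ n) :
    (setGraph n).chromaticNumber = (2 ^ (n - 1) : ℕ) := by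
  let a : Fin n := ⟨0, hn⟩
  have hcard : Fintype.card {s : Finset (Fin n) // a ∈ s} = 2 ^ (n - 1) := by
    rw [Fintype.card_finset_mem, Fintype.card_fin]
  rw [← hcard]
  exact le_antisymm (setGraph.chromaticNumber_le_card_mem a)
    (setGraph.card_mem_le_chromaticNumber a)
end

section
/- In the set-graph G_{A^{(n)}} with n ≥ 2, the set of singleton subsets {{a_1},...,{a_n}} is the unique maximum independent set. -/
/-- A set of vertices is independent if no two of its members are adjacent. -/
def IsIndep {V : Type*} (G : SimpleGraph V) (S : Set V) : Prop :=
  S.Pairwise fun u v => ¬ G.Adj u v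

/-!
Independent sets of the set-graph are families of pairwise disjoint nonempty subsets of `Fin n`.
Their sizes add up to at most `n`, so such a family has at most `n` members, and when it has
exactly `n` members every one of them has size `1`.
-/

open Finset

def singletonVertices (n : ℕ) : Set {s : Finset (Fin n) // s.Nonempty} :=
  {v | ∃ a : Fin n, v.1 = {a}}

theorem Finset.card_eq_one_of_pairwiseDisjoint_of_card_le {ι α : Type*} [Fintype α]
    {s : Finset ι} {f : ι → Finset α} (hdisj : (s : Set ι).PairwiseDisjoint f)
    (hne : ∀ i ∈ s, (f i).Nonempty) (hcard : Fintype.card α ≤ #s) :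
    ∀ i ∈ s, #(f i) = 1 := by
  classical
  have hsum_le : ∑ i ∈ s, #(f i) ≤ ∑ _i ∈ s, 1 := by
    rw [← card_biUnion hdisj, sum_const, smul_eq_mul, mul_one]
    exact (card_le_univ _).trans hcard
  have hone_le : ∀ i ∈ s, 1 ≤ #(f i) := fun i hi => card_pos.mpr (hne i hi)
  intro i hi
  exact ((sum_eq_sum_iff_of_le hone_le).mp
    (le_antisymm (sum_le_sum hone_le) hsum_le) i hi).symm

theorem isIndep_setGraph_iff {n : ℕ} {S : Set {s : Finset (Fin n) // s.Nonempty}} :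
    IsIndep (setGraph n) S ↔ S.Pairwise fun u v => Disjoint u.1 v.1 := by
  refine forall₂_congr fun u _ => forall₂_congr fun v _ => forall_congr' fun huv => ?_
  simp [setGraph, huv, not_nonempty_iff_eq_empty, disjoint_iff_inter_eq_empty]

theorem isIndep_setGraph_singletonVertices (n : ℕ) :
    IsIndep (setGraph n) (singletonVertices n) := by
  rw [isIndep_setGraph_iff]
  rintro u ⟨a, ha⟩ v ⟨b, hb⟩ huv
  have hab : a ≠ b := fun h => huv (Subtype.ext (by rw [ha, hb, h]))
  simpa [ha, hb] using hab

theorem ncard_singletonVertices (n : ℕ) :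
    (singletonVertices n).ncard = n := by
  have hrange : singletonVertices n =
      Set.range fun a : Fin n => ⟨{a}, singleton_nonempty a⟩ := by
    ext v
    exact exists_congr fun a => ⟨fun h => Subtype.ext h.symm, fun h => congrArg Subtype.val h.symm⟩
  have hinj : Function.Injective fun a : Fin n =>
      (⟨{a}, singleton_nonempty a⟩ : {s : Finset (Fin n) // s.Nonempty}) :=
    fun a b h => singleton_injective (congrArg Subtype.val h)
  rw [hrange, Set.ncard_range_of_injective hinj, Nat.card_eq_fintype_card, Fintype.card_fin]

theorem subset_singletonVertices_of_isIndep {n : ℕ} {S : Set {s : Finset (Fin n) // s.Nonempty}}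
    (hS : IsIndep (setGraph n) S) (hcard : S.ncard = n) :
    S ⊆ singletonVertices n := by
  classical
  have hsize : ∀ v ∈ S.toFinset, #v.1 = 1 :=
    card_eq_one_of_pairwiseDisjoint_of_card_le (f := Subtype.val)
      (by rw [Set.coe_toFinset]; exact isIndep_setGraph_iff.mp hS) (fun v _ => v.2)
      (by rw [Fintype.card_fin, ← Set.ncard_eq_toFinset_card', hcard])
  intro v hv
  exact card_eq_one.mp (hsize v (Set.mem_toFinset.mpr hv))

theorem setGraph_unique_max_indepSet_general (n : ℕ) :
    (IsIndep (setGraph n) {v : {s : Finset (Fin n) // s.Nonempty} | ∃ a : Fin n, v.1 = {a}} ∧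
      {v : {s : Finset (Fin n) // s.Nonempty} | ∃ a : Fin n, v.1 = {a}}.ncard = n) ∧
    ∀ S : Set {s : Finset (Fin n) // s.Nonempty}, IsIndep (setGraph n) S → S.ncard = n →
      S = {v : {s : Finset (Fin n) // s.Nonempty} | ∃ a : Fin n, v.1 = {a}} := by
  refine ⟨⟨isIndep_setGraph_singletonVertices n, ncard_singletonVertices n⟩, fun S hS hcard => ?_⟩
  exact Set.eq_of_subset_of_ncard_le (subset_singletonVertices_of_isIndep hS hcard)
    (hcard.trans (ncard_singletonVertices n).symm).ge (Set.toFinite _)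

theorem setGraph_unique_max_indepSet (n : ℕ) (hn : 2 ≤ n) :
    (IsIndep (setGraph n) {v : {s : Finset (Fin n) // s.Nonempty} | ∃ a : Fin n, v.1 = {a}} ∧
      {v : {s : Finset (Fin n) // s.Nonempty} | ∃ a : Fin n, v.1 = {a}}.ncard = n) ∧
    ∀ S : Set {s : Finset (Fin n) // s.Nonempty}, IsIndep (setGraph n) S → S.ncard = n →
      S = {v : {s : Finset (Fin n) // s.Nonempty} | ∃ a : Fin n, v.1 = {a}} :=
  setGraph_unique_max_indepSet_general n
end

section
/- Every vertex of the set-graph G_{A^{(n)}}, n ≥ 1, is contained in some maximum clique (of size 2^{n-1}). -/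
open Finset

theorem Finset.card_filter_mem_univ {α : Type*} [Fintype α] [DecidableEq α] (a : α) :
    #{t : Finset α | a ∈ t} = 2 ^ (Fintype.card α - 1) := by
  calc #{t : Finset α | a ∈ t}
      = #(univ.erase a).powerset :=
        card_nbij' (erase · a) (insert a)
          (fun _ _ ↦ by simp)
          (fun _ _ ↦ by simp)
          (fun _ ht ↦ insert_erase (mem_filter.mp ht).2)
          (fun _ hs ↦ erase_insert fun ha ↦ by simpa using mem_powerset.mp hs ha)
    _ = 2 ^ (Fintype.card α - 1) := by
        rw [card_powerset, card_erase_of_mem (mem_univ a), card_univ]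

namespace setGraph

variable {n : ℕ}

def star (a : Fin n) : Finset {s : Finset (Fin n) // s.Nonempty} :=
  ({t : Finset (Fin n) | a ∈ t} : Finset _).subtype Finset.Nonempty

lemma mem_star {a : Fin n} {s : {s : Finset (Fin n) // s.Nonempty}} :
    s ∈ star a ↔ a ∈ s.1 := by
  simp [star]

lemma isClique_star (a : Fin n) : (setGraph n).IsClique (star a : Set _) :=
  fun _ hs _ ht hst ↦ ⟨hst, a, mem_inter.mpr ⟨mem_star.mp hs, mem_star.mp ht⟩⟩

lemma card_star (a : Fin n) : #(star a) = 2 ^ (n - 1) := by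
  rw [star, card_subtype, filter_true_of_mem fun t ht ↦ ⟨a, (mem_filter.mp ht).2⟩,
    card_filter_mem_univ, Fintype.card_fin]

end setGraph

theorem setGraph_every_vertex_in_max_clique_general (n : ℕ)
    (v : {s : Finset (Fin n) // s.Nonempty}) :
    ∃ S : Finset {s : Finset (Fin n) // s.Nonempty},
      (setGraph n).IsNClique (2 ^ (n - 1)) S ∧ v ∈ S := by
  obtain ⟨a, ha⟩ := v.2
  exact ⟨setGraph.star a, ⟨setGraph.isClique_star a, setGraph.card_star a⟩,
    setGraph.mem_star.mpr ha⟩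

theorem setGraph_every_vertex_in_max_clique (n : ℕ) (hn : 1 ≤ n)
    (v : {s : Finset (Fin n) // s.Nonempty}) :
    ∃ S : Finset {s : Finset (Fin n) // s.Nonempty},
      (setGraph n).IsNClique (2 ^ (n - 1)) S ∧ v ∈ S :=
  setGraph_every_vertex_in_max_clique_general n v
end

section
/- For any graph G, in every proper colouring of the join G' = K_1 + G with χ(G') colours, the apex vertex yields a rainbow neighbourhood, and r_χ(G') = 1 + r_χ(G). -/
/-!
The apex is adjacent to everything, so its colour appears nowhere else: deleting the apex turns a
colouring of `K₁ + G` with `n + 1` colours into one of `G` with the other `n` colours, and a fresh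
colour for the apex extends any colouring of `G`. Hence `χ(K₁ + G) = χ(G) + 1`, so a colouring
with `χ(K₁ + G)` colours is surjective, which makes the apex rainbow. For a vertex `v` of `G` the
apex supplies the apex colour to `N[v]`, and every other colour lies in `N[v]` exactly when it
does for the restricted colouring; so the rainbow vertices of `K₁ + G` are the apex together with
the rainbow vertices of `G`.
-/

/-- The join `K₁ + G`: a new apex vertex (`none`) adjacent to all vertices of `G`. -/
def joinK1 {V : Type*} (G : SimpleGraph V) : SimpleGraph (Option V) where
  Adj a b := match a, b with
    | none, some _ => True
    | some _, none => True
    | some u, some w => G.Adj u w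
    | none, none => False
  symm := by
    constructor
    intro a b h
    match a, b with
    | none, some _ => exact h
    | some _, none => exact h
    | some u, some w => exact G.adj_symm h
    | none, none => exact h
  loopless := by
    constructor
    intro a h
    match a with
    | none => exact h
    | some u => exact G.irrefl h

open SimpleGraph Function

section

variable {V α β : Type*} {G : SimpleGraph V}

namespace SimpleGraph.Coloring

def IsRainbowAt (c : G.Coloring α) (v : V) : Prop :=
  ∀ i, ∃ u, (u = v ∨ G.Adj v u) ∧ c u = i

theorem isRainbowAt_recolorOfEquiv (f : α ≃ β) (c : G.Coloring α) (v : V) :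
    (G.recolorOfEquiv f c).IsRainbowAt v ↔ c.IsRainbowAt v := by
  simp only [IsRainbowAt, coe_recolorOfEquiv]
  exact (f.forall_congr fun _ => exists_congr fun _ =>
    and_congr_right fun _ => f.apply_eq_iff_eq.symm).symm

theorem isRainbowAt_of_surjective {c : G.Coloring α} (hc : Surjective c) {v : V}
    (hv : ∀ u, u ≠ v → G.Adj v u) : c.IsRainbowAt v := fun i => by
  obtain ⟨u, rfl⟩ := hc i
  exact ⟨u, (em (u = v)).imp_right (hv u), rfl⟩

end SimpleGraph.Coloring

open SimpleGraph.Coloring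

theorem joinK1_adj_none_some (u : V) : (joinK1 G).Adj none (some u) := trivial

theorem joinK1_adj_some_none (u : V) : (joinK1 G).Adj (some u) none := trivial

@[simp]
theorem joinK1_adj_some_some {u w : V} : (joinK1 G).Adj (some u) (some w) ↔ G.Adj u w := Iff.rfl

def SimpleGraph.Coloring.extendJoinK1 (c : G.Coloring α) : (joinK1 G).Coloring (Option α) :=
  Coloring.mk (Option.map c) fun {a b} hab => by
    match a, b with
    | none, some _ | some _, none => simp
    | some _, some _ => simpa using c.valid hab

def SimpleGraph.Coloring.restrictJoinK1 (c : (joinK1 G).Coloring α) :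
    G.Coloring {i // i ≠ c none} :=
  Coloring.mk (fun u => ⟨c (some u), (c.valid (joinK1_adj_none_some u)).symm⟩)
    fun hab hc => c.valid (joinK1_adj_some_some.2 hab) (congrArg Subtype.val hc)

theorem colorable_joinK1_succ_iff {n : ℕ} : (joinK1 G).Colorable (n + 1) ↔ G.Colorable n := by
  constructor
  · rintro ⟨c⟩
    exact ⟨G.recolorOfEquiv (finSuccAboveEquiv (c none)).symm c.restrictJoinK1⟩
  · rintro ⟨c⟩
    simpa using c.extendJoinK1.colorable

theorem not_colorable_joinK1_zero : ¬ (joinK1 G).Colorable 0 := fun ⟨c⟩ => (c none).elim0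

theorem chromaticNumber_joinK1 : (joinK1 G).chromaticNumber = G.chromaticNumber + 1 := by
  apply le_antisymm
  · cases h : G.chromaticNumber using ENat.recTopCoe with
    | top => simp
    | coe n =>
      exact_mod_cast (colorable_joinK1_succ_iff.2
        (chromaticNumber_le_iff_colorable.1 h.le)).chromaticNumber_le
  · cases h : (joinK1 G).chromaticNumber using ENat.recTopCoe with
    | top => exact le_top
    | coe m =>
      obtain _ | n := m
      · exact absurd (chromaticNumber_le_iff_colorable.1 h.le) not_colorable_joinK1_zero
      · have hG := colorable_joinK1_succ_iff.1 (chromaticNumber_le_iff_colorable.1 h.le)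
        push_cast
        gcongr
        exact hG.chromaticNumber_le

theorem isRainbowAt_none_joinK1 {c : (joinK1 G).Coloring α} (hc : Surjective c) :
    c.IsRainbowAt none :=
  isRainbowAt_of_surjective hc fun
    | none, h => (h rfl).elim
    | some u, _ => joinK1_adj_none_some u

theorem isRainbowAt_some_joinK1_iff {c : (joinK1 G).Coloring α} {v : V} :
    c.IsRainbowAt (some v) ↔ c.restrictJoinK1.IsRainbowAt v := by
  constructor
  · rintro hv ⟨i, hi⟩
    obtain ⟨_ | u, hu, hcu⟩ := hv i
    · exact (hi hcu.symm).elim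
    · exact ⟨u, hu.imp (Option.some_injective _ ·) id, Subtype.ext hcu⟩
  · intro hv i
    by_cases hi : i = c none
    · exact ⟨none, .inr (joinK1_adj_some_none v), hi.symm⟩
    · obtain ⟨u, hu, hcu⟩ := hv ⟨i, hi⟩
      exact ⟨some u, hu.imp (congrArg some) id, congrArg Subtype.val hcu⟩

theorem ncard_setOf_isRainbowAt_joinK1 [Finite V] {c : (joinK1 G).Coloring α}
    (hc : Surjective c) :
    {v | c.IsRainbowAt v}.ncard = 1 + {v | c.restrictJoinK1.IsRainbowAt v}.ncard := by
  have hset :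
      {v | c.IsRainbowAt v} = insert none (some '' {v | c.restrictJoinK1.IsRainbowAt v}) := by
    ext (_ | v)
    · simpa using isRainbowAt_none_joinK1 hc
    · simpa using isRainbowAt_some_joinK1_iff
  rw [hset, Set.ncard_insert_of_notMem (by simp) (Set.toFinite _),
    Set.ncard_image_of_injective _ (Option.some_injective V), add_comm]

end

theorem joinK1_rainbow {V : Type*} [Fintype V] (G : SimpleGraph V) (k : ℕ)
    (hk : G.chromaticNumber = (k : ℕ)) :
    (joinK1 G).chromaticNumber = ((k + 1 : ℕ) : ℕ∞) ∧
    ∀ c' : (joinK1 G).Coloring (Fin (k + 1)),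
      (∀ i : Fin (k + 1), ∃ u, (u = (none : Option V) ∨ (joinK1 G).Adj none u) ∧ c' u = i) ∧
      ∃ c : G.Coloring (Fin k),
        {v : Option V | ∀ i : Fin (k + 1),
            ∃ u, (u = v ∨ (joinK1 G).Adj v u) ∧ c' u = i}.ncard
          = 1 + {v : V | ∀ i : Fin k, ∃ u, (u = v ∨ G.Adj v u) ∧ c u = i}.ncard := by
  have hχ : (joinK1 G).chromaticNumber = ((k + 1 : ℕ) : ℕ∞) := by
    rw [chromaticNumber_joinK1, hk, Nat.cast_succ]
  refine ⟨hχ, fun c' => ?_⟩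
  have hsurj : Surjective c' :=
    (chromaticNumber_eq_iff_forall_surjective (chromaticNumber_le_iff_colorable.1 hχ.le)).1 hχ c'
  refine ⟨isRainbowAt_none_joinK1 hsurj,
    G.recolorOfEquiv (finSuccAboveEquiv (c' none)).symm c'.restrictJoinK1, ?_⟩
  have h := ncard_setOf_isRainbowAt_joinK1 hsurj
  simp_rw [← Coloring.isRainbowAt_recolorOfEquiv (finSuccAboveEquiv (c' none)).symm] at h
  exact h
end

section
/- For the path P_n with n ≥ 4 even, the maximax independence chromatic number equals 3 = χ(P_n) + 1; for n ≥ 5 odd it equals 2 = χ(P_n). -/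
/-- The independence number of `G` restricted to the vertex set `R`. -/
noncomputable def indepNumOn {V : Type*} (G : SimpleGraph V) (R : Set V) : ℕ :=
  sSup {k : ℕ | ∃ S : Set V, S ⊆ R ∧ IsIndep G S ∧ S.ncard = k}

/-- `S` is a maximum independent set of `G` restricted to `R`. -/
def IsMaxIndepOn {V : Type*} (G : SimpleGraph V) (R S : Set V) : Prop :=
  S ⊆ R ∧ IsIndep G S ∧ S.ncard = indepNumOn G R

/-- One step of the maximax independence procedure on remaining vertex set `R`:
remove a maximum independent set `S` chosen so that the remaining graph has
minimum independence number among all choices of maximum independent set. -/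
def IsMaximaxStep {V : Type*} (G : SimpleGraph V) (R S : Set V) : Prop :=
  IsMaxIndepOn G R S ∧
    ∀ T : Set V, IsMaxIndepOn G R T → indepNumOn G (R \ S) ≤ indepNumOn G (R \ T)

/-- `IsMaximaxSeq G R L` : the list `L` of colour classes is obtained by iterating
the maximax independence procedure starting from remaining vertex set `R`,
until no vertex remains. -/
def IsMaximaxSeq {V : Type*} (G : SimpleGraph V) : Set V → List (Set V) → Prop
  | R, [] => R = ∅
  | R, S :: L => S.Nonempty ∧ IsMaximaxStep G R S ∧ IsMaximaxSeq G (R \ S) L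

/-- `χ^{i-max}(G) = ℓ` : the maximax independence, maximum proper colouring of `G`
uses exactly `ℓ` colours. -/
def ChiImaxEq {V : Type*} (G : SimpleGraph V) (ℓ : ℕ) : Prop :=
  (∃ L, IsMaximaxSeq G Set.univ L ∧ L.length = ℓ) ∧
    ∀ L, IsMaximaxSeq G Set.univ L → L.length = ℓ

/-!
Pair the vertices of `P_n` as `{2j, 2j+1}`. An independent set meets each pair at most once, so
`α(P_n) = ⌈n/2⌉` and a maximum independent set meets every pair exactly once. As the odd vertex of
a pair is adjacent to the even vertex of the next pair, such a set takes the even vertices of the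
pairs before some index `k` and the odd vertices from then on.

For `n = 2m + 1` the last pair is the single vertex `2m`, so the first colour class is the set of
even vertices and the odd ones, being independent, form the second and last class.

For `n = 2m` the complement of the `k`-th such set is independent for `k = 0` and `k = m`, and
otherwise contains exactly one edge `{2k - 1, 2k}`, so its independence number drops to `m - 1`.
The maximax rule therefore picks `0 < k < m`, and the remaining `m` vertices need two more colours.
-/

open SimpleGraph Set

section IndepNum

variable {V : Type*} {G : SimpleGraph V} {R S : Set V}

lemma isIndep_singleton (G : SimpleGraph V) (a : V) : IsIndep G {a} := pairwise_singleton a _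

lemma bddAbove_indepSizes [Finite V] (G : SimpleGraph V) (R : Set V) :
    BddAbove {k : ℕ | ∃ S : Set V, S ⊆ R ∧ IsIndep G S ∧ S.ncard = k} :=
  ⟨R.ncard, by rintro k ⟨S, hSR, -, rfl⟩; exact ncard_le_ncard hSR⟩

lemma ncard_le_indepNumOn [Finite V] (hSR : S ⊆ R) (hS : IsIndep G S) : S.ncard ≤ indepNumOn G R :=
  le_csSup (bddAbove_indepSizes G R) ⟨S, hSR, hS, rfl⟩

lemma indepNumOn_le {k : ℕ} (h : ∀ S ⊆ R, IsIndep G S → S.ncard ≤ k) : indepNumOn G R ≤ k :=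
  csSup_le ⟨0, ∅, empty_subset R, pairwise_empty _, ncard_empty V⟩
    (by rintro _ ⟨S, hSR, hS, rfl⟩; exact h S hSR hS)

lemma indepNumOn_le_ncard [Finite V] (G : SimpleGraph V) (R : Set V) : indepNumOn G R ≤ R.ncard :=
  indepNumOn_le fun _ hSR _ => ncard_le_ncard hSR

lemma exists_isMaxIndepOn [Finite V] (G : SimpleGraph V) (R : Set V) : ∃ S, IsMaxIndepOn G R S := by
  obtain ⟨S, hSR, hS, hcard⟩ := Nat.sSup_mem
    (s := {k : ℕ | ∃ S : Set V, S ⊆ R ∧ IsIndep G S ∧ S.ncard = k})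
    ⟨0, ∅, empty_subset R, pairwise_empty _, ncard_empty V⟩ (bddAbove_indepSizes G R)
  exact ⟨S, hSR, hS, hcard⟩

lemma indepNumOn_of_isIndep [Finite V] (hR : IsIndep G R) : indepNumOn G R = R.ncard :=
  (indepNumOn_le_ncard G R).antisymm (ncard_le_indepNumOn subset_rfl hR)

lemma IsMaxIndepOn.eq_of_isIndep [Finite V] (hS : IsMaxIndepOn G R S) (hR : IsIndep G R) : S = R :=
  eq_of_subset_of_ncard_le hS.1 (by rw [hS.2.2, indepNumOn_of_isIndep hR])

lemma indepNumOn_lt_ncard [Finite V] (hR : ¬IsIndep G R) : indepNumOn G R < R.ncard := by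
  refine (indepNumOn_le_ncard G R).lt_of_ne fun h => hR ?_
  obtain ⟨S, hS⟩ := exists_isMaxIndepOn G R
  exact eq_of_subset_of_ncard_le hS.1 (by rw [hS.2.2, h]) ▸ hS.2.1

lemma indepNumOn_add_one_eq_ncard [Finite V] {a : V} (hR : ¬IsIndep G R)
    (ha : IsIndep G (R \ {a})) : indepNumOn G R + 1 = R.ncard := by
  have haR : a ∈ R := by
    by_contra haR
    exact hR (by rwa [sdiff_singleton_eq_self haR] at ha)
  have := ncard_le_indepNumOn sdiff_subset ha
  have := ncard_sdiff_singleton_add_one haR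
  have := indepNumOn_lt_ncard hR
  omega

lemma IsMaxIndepOn.nonempty [Finite V] (hS : IsMaxIndepOn G R S) (hR : R.Nonempty) :
    S.Nonempty := by
  obtain ⟨a, ha⟩ := hR
  have := ncard_le_indepNumOn (singleton_subset_iff.2 ha) (isIndep_singleton G a)
  rw [ncard_singleton, ← hS.2.2] at this
  exact nonempty_of_ncard_ne_zero (by omega)

end IndepNum

section Maximax

variable {V : Type*} {G : SimpleGraph V} {R S T : Set V} {L : List (Set V)}

lemma exists_isMaximaxStep [Finite V] (G : SimpleGraph V) (R : Set V) :
    ∃ S, IsMaximaxStep G R S := by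
  obtain ⟨S, hS, hmin⟩ :=
    Nat.sInf_mem (s := {a | ∃ S, IsMaxIndepOn G R S ∧ indepNumOn G (R \ S) = a})
    (by obtain ⟨S, hS⟩ := exists_isMaxIndepOn G R; exact ⟨_, S, hS, rfl⟩)
  exact ⟨S, hS, fun T hT => hmin ▸ Nat.sInf_le ⟨T, hT, rfl⟩⟩

lemma exists_isMaximaxSeq [Finite V] (G : SimpleGraph V) (R : Set V) : ∃ L, IsMaximaxSeq G R L := by
  induction hk : R.ncard using Nat.strong_induction_on generalizing R with
  | _ k ih =>
    rcases R.eq_empty_or_nonempty with rfl | hR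
    · exact ⟨[], rfl⟩
    obtain ⟨S, hS⟩ := exists_isMaximaxStep G R
    have hSne := hS.1.nonempty hR
    have hlt : (R \ S).ncard < k := by
      rw [ncard_sdiff hS.1.1, ← hk]
      have := (ncard_pos (s := S)).2 hSne
      have := ncard_le_ncard hS.1.1
      omega
    obtain ⟨L, hL⟩ := ih _ hlt (R \ S) rfl
    exact ⟨S :: L, hSne, hS, hL⟩

lemma IsMaximaxSeq.eq_nil_of_empty (h : IsMaximaxSeq G ∅ L) : L = [] := by
  cases L with
  | nil => rfl
  | cons S L =>
    obtain ⟨⟨a, ha⟩, hS, -⟩ := h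
    exact absurd (hS.1.1 ha) (notMem_empty a)

lemma IsMaximaxSeq.exists_cons (h : IsMaximaxSeq G R L) (hR : R.Nonempty) :
    ∃ S L', L = S :: L' ∧ IsMaximaxStep G R S ∧ IsMaximaxSeq G (R \ S) L' := by
  cases L with
  | nil => exact absurd (h : R = ∅) hR.ne_empty
  | cons S L' => exact ⟨S, L', rfl, h.2⟩

lemma IsMaximaxSeq.length_eq_one [Finite V] (h : IsMaximaxSeq G R L) (hR : IsIndep G R)
    (hne : R.Nonempty) : L.length = 1 := by
  obtain ⟨S, L', rfl, hS, hL'⟩ := h.exists_cons hne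
  rw [hS.1.eq_of_isIndep hR, sdiff_self] at hL'
  rw [hL'.eq_nil_of_empty, List.length_singleton]

lemma IsMaximaxSeq.length_eq_two [Finite V] (h : IsMaximaxSeq G R L)
    (hR : indepNumOn G R + 1 = R.ncard) : L.length = 2 := by
  have hne : R.Nonempty := nonempty_of_ncard_ne_zero (by omega)
  obtain ⟨S, L', rfl, hS, hL'⟩ := h.exists_cons hne
  obtain ⟨a, ha⟩ : ∃ a, R \ S = {a} := ncard_eq_one.1 (by rw [ncard_sdiff hS.1.1, hS.1.2.2]; omega)
  rw [ha] at hL'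
  rw [List.length_cons, hL'.length_eq_one (isIndep_singleton G a) (singleton_nonempty a)]

/-- All maximum independent sets have the same size, hence so do the remainders they leave. -/
lemma IsMaximaxStep.isIndep_diff [Finite V] (hS : IsMaximaxStep G R S) (hT : IsMaxIndepOn G R T)
    (hRS : IsIndep G (R \ S)) : IsIndep G (R \ T) := by
  by_contra hRT
  have hmin := hS.2 T hT
  have hlt := indepNumOn_lt_ncard hRT
  rw [indepNumOn_of_isIndep hRS, ncard_sdiff hS.1.1, ncard_sdiff hT.1, hS.1.2.2, hT.2.2] at *
  omega

lemma chiImaxEq_of_forall_length_eq [Finite V] {ℓ : ℕ}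
    (h : ∀ L, IsMaximaxSeq G univ L → L.length = ℓ) : ChiImaxEq G ℓ := by
  obtain ⟨L, hL⟩ := exists_isMaximaxSeq G univ
  exact ⟨⟨L, hL, h L hL⟩, h⟩

end Maximax

section Path

variable {n k : ℕ} {S : Set (Fin n)}

lemma isIndep_pathGraph_iff :
    IsIndep (pathGraph n) S ↔ ∀ u ∈ S, ∀ v ∈ S, (u : ℕ) + 1 ≠ v := by
  refine ⟨fun h u hu v hv huv => ?_, fun h u hu v hv _ huv => ?_⟩
  · exact h hu hv (fun e => by subst e; omega) (pathGraph_adj.2 (Or.inl huv))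
  · rcases pathGraph_adj.1 huv with e | e
    exacts [h u hu v hv e, h v hv u hu e]

/-- The vertices `2 * j` and `2 * j + 1` of the path form its `j`-th pair. -/
def pairIndex (i : Fin n) : ℕ := i / 2

lemma mapsTo_pairIndex (S : Set (Fin n)) : MapsTo pairIndex S (Iio ((n + 1) / 2)) := by
  intro i _
  have := i.2
  simp only [pairIndex, mem_Iio]
  omega

lemma injOn_pairIndex (hS : IsIndep (pathGraph n) S) : InjOn pairIndex S := by
  intro u hu v hv huv
  rw [isIndep_pathGraph_iff] at hS
  have := hS u hu v hv
  have := hS v hv u hu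
  simp only [pairIndex] at huv
  exact Fin.ext (by omega)

lemma ncard_le_of_isIndep_pathGraph (hS : IsIndep (pathGraph n) S) : S.ncard ≤ (n + 1) / 2 := by
  simpa using ncard_le_ncard_of_injOn pairIndex (mapsTo_pairIndex S) (injOn_pairIndex hS)

lemma ncard_ge_of_surjOn_pairIndex (hS : SurjOn pairIndex S (Iio ((n + 1) / 2))) :
    (n + 1) / 2 ≤ S.ncard := by
  simpa using (ncard_le_ncard hS).trans (ncard_image_le (f := pairIndex))

def evenThenOdd (n k : ℕ) : Set (Fin n) :=
  {i | ((i : ℕ) < 2 * k ∧ (i : ℕ) % 2 = 0) ∨ (2 * k ≤ (i : ℕ) ∧ (i : ℕ) % 2 = 1)}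

lemma isIndep_evenThenOdd : IsIndep (pathGraph n) (evenThenOdd n k) := by
  rw [isIndep_pathGraph_iff]
  intro u hu v hv
  simp only [evenThenOdd, mem_ofPred_eq] at hu hv
  omega

lemma surjOn_pairIndex_evenThenOdd (h : Even n ∨ n ≤ 2 * k) :
    SurjOn pairIndex (evenThenOdd n k) (Iio ((n + 1) / 2)) := by
  intro j hj
  simp only [mem_Iio] at hj
  have hn : 2 * j + 1 < n ∨ j < k := by rcases h with ⟨m, rfl⟩ | h <;> omega
  by_cases hjk : j < k
  · exact ⟨⟨2 * j, by omega⟩, by simp [evenThenOdd]; omega, by simp [pairIndex]⟩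
  · exact ⟨⟨2 * j + 1, by omega⟩, by simp [evenThenOdd]; omega, by simp [pairIndex]; omega⟩

lemma indepNumOn_pathGraph_univ : indepNumOn (pathGraph n) univ = (n + 1) / 2 :=
  (indepNumOn_le fun _ _ hS => ncard_le_of_isIndep_pathGraph hS).antisymm <|
    (ncard_ge_of_surjOn_pairIndex (surjOn_pairIndex_evenThenOdd (Or.inr (by omega)))).trans
      (ncard_le_indepNumOn (subset_univ _) (isIndep_evenThenOdd (k := n)))

lemma isMaxIndepOn_pathGraph_univ_iff :
    IsMaxIndepOn (pathGraph n) univ S ↔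
      IsIndep (pathGraph n) S ∧ SurjOn pairIndex S (Iio ((n + 1) / 2)) := by
  rw [IsMaxIndepOn, indepNumOn_pathGraph_univ]
  refine ⟨fun ⟨_, hS, hcard⟩ => ⟨hS, ?_⟩, fun ⟨hS, hsurj⟩ => ⟨subset_univ S, hS, ?_⟩⟩
  · refine (eq_of_subset_of_ncard_le (mapsTo_pairIndex S).image_subset ?_).symm.subset
    rw [(injOn_pairIndex hS).ncard_image, hcard]
    simp
  · exact (ncard_le_of_isIndep_pathGraph hS).antisymm (ncard_ge_of_surjOn_pairIndex hsurj)

/-- The even vertex of pair `j' + 1` is adjacent to the odd vertex of pair `j'`. -/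
lemma exists_odd_mem_of_le (hS : IsIndep (pathGraph n) S)
    (hsurj : SurjOn pairIndex S (Iio ((n + 1) / 2))) {j j' : ℕ}
    (hj : ∃ i ∈ S, (i : ℕ) = 2 * j + 1) (hjj' : j ≤ j') (hj' : j' < (n + 1) / 2) :
    ∃ i ∈ S, (i : ℕ) = 2 * j' + 1 := by
  induction j', hjj' using Nat.le_induction with
  | base => exact hj
  | succ j' _ ih =>
    obtain ⟨u, hu, hu'⟩ := ih (by omega)
    obtain ⟨v, hv, hv'⟩ := hsurj (show j' + 1 ∈ Iio ((n + 1) / 2) from hj')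
    have := (isIndep_pathGraph_iff.1 hS) u hu v hv
    simp only [pairIndex] at hv'
    exact ⟨v, hv, by omega⟩

lemma exists_eq_evenThenOdd (hS : IsIndep (pathGraph n) S)
    (hsurj : SurjOn pairIndex S (Iio ((n + 1) / 2))) : ∃ k, S = evenThenOdd n k := by
  classical
  have hex : ∃ k, (n + 1) / 2 ≤ k ∨ ∃ i ∈ S, (i : ℕ) = 2 * k + 1 := ⟨_, Or.inl le_rfl⟩
  refine ⟨Nat.find hex, ?_⟩
  have hsub : S ⊆ evenThenOdd n (Nat.find hex) := by
    intro i hi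
    have := i.2
    simp only [evenThenOdd, mem_ofPred_eq]
    by_cases hik : (i : ℕ) / 2 < Nat.find hex
    · have := (not_or.1 (Nat.find_min hex hik)).2
      have : (i : ℕ) ≠ 2 * ((i : ℕ) / 2) + 1 := fun h => this ⟨i, hi, h⟩
      omega
    · rcases Nat.find_spec hex with h | h
      · omega
      obtain ⟨u, hu, hu'⟩ := exists_odd_mem_of_le hS hsurj h (not_lt.1 hik) (by omega)
      have := (isIndep_pathGraph_iff.1 hS) i hi u hu
      omega
  refine hsub.antisymm fun i hi => ?_
  obtain ⟨u, hu, hu'⟩ := hsurj (mapsTo_pairIndex _ hi)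
  have hu'' := hsub hu
  simp only [evenThenOdd, mem_ofPred_eq, pairIndex] at hi hu'' hu'
  rwa [show i = u from Fin.ext (by omega)]

lemma isIndep_compl_evenThenOdd_iff :
    IsIndep (pathGraph n) (evenThenOdd n k)ᶜ ↔ k = 0 ∨ n ≤ 2 * k := by
  rw [isIndep_pathGraph_iff]
  simp only [evenThenOdd, mem_compl_iff, mem_ofPred_eq]
  refine ⟨fun h => ?_, fun h u hu v hv => by omega⟩
  by_contra hk
  exact h ⟨2 * k - 1, by omega⟩ (by simp; omega) ⟨2 * k, by omega⟩ (by simp) (by simp; omega)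

lemma indepNumOn_compl_evenThenOdd_add_one (hk : 0 < k) (hkn : 2 * k < n) :
    indepNumOn (pathGraph n) (evenThenOdd n k)ᶜ + 1 = (evenThenOdd n k)ᶜ.ncard := by
  refine indepNumOn_add_one_eq_ncard (a := ⟨2 * k, hkn⟩)
    (fun h => by have := isIndep_compl_evenThenOdd_iff.1 h; omega) ?_
  rw [isIndep_pathGraph_iff]
  simp only [evenThenOdd, mem_sdiff, mem_compl_iff, mem_ofPred_eq, mem_singleton_iff, Fin.ext_iff]
  omega

end Path

lemma chiImaxEq_pathGraph_even {m : ℕ} (hm : 2 ≤ m) : ChiImaxEq (pathGraph (2 * m)) 3 := by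
  refine chiImaxEq_of_forall_length_eq fun L hL => ?_
  obtain ⟨S, L', rfl, hS, hL'⟩ := hL.exists_cons ⟨⟨0, by omega⟩, mem_univ _⟩
  obtain ⟨hSind, hSsurj⟩ := isMaxIndepOn_pathGraph_univ_iff.1 hS.1
  obtain ⟨k, rfl⟩ := exists_eq_evenThenOdd hSind hSsurj
  have hT₁ : IsMaxIndepOn (pathGraph (2 * m)) univ (evenThenOdd (2 * m) 1) :=
    isMaxIndepOn_pathGraph_univ_iff.2
      ⟨isIndep_evenThenOdd, surjOn_pairIndex_evenThenOdd (Or.inl (even_two_mul m))⟩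
  have hk : 0 < k ∧ 2 * k < 2 * m := by
    by_contra hk
    have hind : IsIndep (pathGraph (2 * m)) (univ \ evenThenOdd (2 * m) k) := by
      rw [← compl_eq_univ_sdiff, isIndep_compl_evenThenOdd_iff]
      omega
    have := isIndep_compl_evenThenOdd_iff.1 (compl_eq_univ_sdiff _ ▸ hS.isIndep_diff hT₁ hind)
    omega
  rw [← compl_eq_univ_sdiff] at hL'
  simpa using hL'.length_eq_two (indepNumOn_compl_evenThenOdd_add_one hk.1 hk.2)

lemma chiImaxEq_pathGraph_odd {m : ℕ} (hm : 1 ≤ m) : ChiImaxEq (pathGraph (2 * m + 1)) 2 := by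
  refine chiImaxEq_of_forall_length_eq fun L hL => ?_
  obtain ⟨S, L', rfl, hS, hL'⟩ := hL.exists_cons ⟨⟨0, by omega⟩, mem_univ _⟩
  obtain ⟨hSind, hSsurj⟩ := isMaxIndepOn_pathGraph_univ_iff.1 hS.1
  obtain ⟨k, rfl⟩ := exists_eq_evenThenOdd hSind hSsurj
  have hk : 2 * m + 1 ≤ 2 * k := by
    obtain ⟨i, hi, hi'⟩ := hSsurj (show m ∈ Iio ((2 * m + 1 + 1) / 2) by simp; omega)
    have := i.2
    simp only [evenThenOdd, mem_ofPred_eq, pairIndex] at hi hi'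
    omega
  rw [← compl_eq_univ_sdiff] at hL'
  have hne : (evenThenOdd (2 * m + 1) k)ᶜ.Nonempty := ⟨⟨1, by omega⟩, by simp [evenThenOdd]; omega⟩
  simpa using hL'.length_eq_one (isIndep_compl_evenThenOdd_iff.2 (Or.inr hk)) hne

theorem pathGraph_chiImax (n : ℕ) :
    (4 ≤ n → Even n → ChiImaxEq (SimpleGraph.pathGraph n) 3) ∧
    (5 ≤ n → Odd n → ChiImaxEq (SimpleGraph.pathGraph n) 2) := by
  refine ⟨fun hn ⟨m, hm⟩ => ?_, fun hn ⟨m, hm⟩ => ?_⟩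
  · rw [hm, ← two_mul]
    exact chiImaxEq_pathGraph_even (by omega)
  · subst hm
    exact chiImaxEq_pathGraph_odd (by omega)
end
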